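/- The order ▷_ℓ on terms and sequences over a finite signature with a well-founded precedence is well-founded. -/

import Mathlib

/-- First-order terms over signature `F` and variables `V`. -/
inductive Trm (F V : Type) where
  | var : V → Trm F V
  | fn : F → List (Trm F V) → Trm F V

/-- `SSub s t` : `t` is a strict subterm of `s`. -/
inductive SSub {F V : Type} : Trm F V → Trm F V → Prop where
  | arg {f ts t} : t ∈ ts → SSub (Trm.fn f ts) t
  | trans {f ts s t} : s ∈ ts → SSub s t → SSub (Trm.fn f ts) t

/-- Reflexive closure of a relation, used for product extensions. -/
def EqOr {α : Type} (r : α → α → Prop) (a b : α) : Prop := a = b ∨ r a b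

/-- Product extension of a relation on lists: componentwise equal-or-smaller,
with at least one component strictly smaller. -/
def ProdExtL {α : Type} (r : α → α → Prop) (xs ys : List α) : Prop :=
  List.Forall₂ (EqOr r) xs ys ∧
    ∃ i, ∃ (h₁ : i < xs.length) (h₂ : i < ys.length), r xs[i] ys[i]

/-- Elements compared by `▷_ℓ`: terms (inl) or sequences of terms (inr). -/
abbrev TS (F V : Type) := Trm F V ⊕ List (Trm F V)

/-- Identification of a term with the singleton sequence. -/
def toL {F V : Type} : TS F V → List (Trm F V) := Sum.elim (fun t => [t]) id

mutual
  /-- The auxiliary order `▷_ℓ` (Definition of `poel`) on terms and sequences,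
  induced by a precedence `prec` and the width bound `ℓ`. -/
  inductive Poel {F V : Type} (prec : F → F → Prop) (ℓ : ℕ) : TS F V → TS F V → Prop where
    /- clause (1): precedence descent to strict subterms, width at most ℓ -/
    | ia {f g : F} {ss ts : List (Trm F V)} :
        prec f g → (∀ t ∈ ts, SSub (Trm.fn f ss) t) → ts.length ≤ ℓ →
        Poel prec ℓ (Sum.inl (Trm.fn f ss)) (Sum.inl (Trm.fn g ts))
    /- clause (2): same symbol, product extension of the strict-subterm order -/
    | tsc {f : F} {ss ts : List (Trm F V)} :
        ProdExtL SSub ss ts →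
        Poel prec ℓ (Sum.inl (Trm.fn f ss)) (Sum.inl (Trm.fn f ts))
    /- clause (3): descent from a term to a sequence of at most ℓ smaller terms -/
    | ialst {f : F} {ss ts : List (Trm F V)} :
        (∀ t ∈ ts, Poel prec ℓ (Sum.inl (Trm.fn f ss)) (Sum.inl t)) → ts.length ≤ ℓ →
        Poel prec ℓ (Sum.inl (Trm.fn f ss)) (Sum.inr ts)
    /- clause (4): sequences, splitting `ts = b₁ ++ ⋯ ++ b_k` with
       `⟨s₁,…,s_k⟩` greater than `⟨b₁,…,b_k⟩` in the product extension of `▷_ℓ` -/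
    | ms {ss ts : List (Trm F V)} (bs : List (TS F V)) :
        ts = (bs.map toL).flatten →
        PoelProd prec ℓ (ss.map Sum.inl) bs →
        Poel prec ℓ (Sum.inr ss) (Sum.inr ts)

  /-- Product extension of `▷_ℓ`: componentwise equal-or-smaller with at
  least one strict decrease. -/
  inductive PoelProd {F V : Type} (prec : F → F → Prop) (ℓ : ℕ) :
      List (TS F V) → List (TS F V) → Prop where
    | strict {a b as bs} : Poel prec ℓ a b → PoelGE prec ℓ as bs →
        PoelProd prec ℓ (a :: as) (b :: bs)
    | cons_eq {a as bs} : PoelProd prec ℓ as bs → PoelProd prec ℓ (a :: as) (a :: bs)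
    | cons_lt {a b as bs} : Poel prec ℓ a b → PoelProd prec ℓ as bs →
        PoelProd prec ℓ (a :: as) (b :: bs)

  /-- Componentwise equal-or-smaller (w.r.t. `▷_ℓ`) lists of equal length. -/
  inductive PoelGE {F V : Type} (prec : F → F → Prop) (ℓ : ℕ) :
      List (TS F V) → List (TS F V) → Prop where
    | nil : PoelGE prec ℓ [] []
    | cons_eq {a as bs} : PoelGE prec ℓ as bs → PoelGE prec ℓ (a :: as) (a :: bs)
    | cons_lt {a b as bs} : Poel prec ℓ a b → PoelGE prec ℓ as bs →
        PoelGE prec ℓ (a :: as) (b :: bs)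
end

/-! Each element of `TS F V` is measured by the multiset of terms it consists of. Every
`▷_ℓ`-step strictly decreases this multiset in the transitive closure of `CutExpand`
over the restriction of `▷_ℓ` to terms, which is well-founded because it is contained in
the lexicographic product of the precedence (well-founded on the finite signature) and
the multiset extension of the strict-subterm order applied to the argument lists. -/

namespace Relation

variable {α : Type} {r : α → α → Prop} {s s' t t' : Multiset α}

theorem ReflTransGen.cutExpand_add (hs : ReflTransGen (CutExpand r) s' s)
    (ht : ReflTransGen (CutExpand r) t' t) :
    ReflTransGen (CutExpand r) (s' + t') (s + t) :=
  (ht.lift (s' + ·) fun _ _ h => (cutExpand_add_left s').mpr h).trans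
    (hs.lift (· + t) fun _ _ h => (cutExpand_add_right t).mpr h)

theorem TransGen.cutExpand_add_reflTransGen (hs : TransGen (CutExpand r) s' s)
    (ht : ReflTransGen (CutExpand r) t' t) :
    TransGen (CutExpand r) (s' + t') (s + t) :=
  TransGen.trans_right (ht.lift (s' + ·) fun _ _ h => (cutExpand_add_left s').mpr h)
    (hs.lift (· + t) fun _ _ h => (cutExpand_add_right t).mpr h)

theorem ReflTransGen.cutExpand_add_transGen (hs : ReflTransGen (CutExpand r) s' s)
    (ht : TransGen (CutExpand r) t' t) :
    TransGen (CutExpand r) (s' + t') (s + t) := by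
  simpa only [add_comm] using ht.cutExpand_add_reflTransGen hs

end Relation

open Relation

section ProdExtL

variable {α : Type} {r : α → α → Prop}

theorem EqOr.reflTransGen_cutExpand {x y : α} (h : EqOr r x y) :
    ReflTransGen (CutExpand (flip r)) {y} {x} := by
  rcases h with rfl | h
  · exact .refl
  · exact .single (cutExpand_singleton_singleton h)

theorem reflTransGen_cutExpand_of_forall₂ {xs ys : List α}
    (h : List.Forall₂ (EqOr r) xs ys) :
    ReflTransGen (CutExpand (flip r)) (ys : Multiset α) xs := by
  induction h with
  | nil => exact .refl
  | @cons x y xs ys hxy _ ih =>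
    rw [← Multiset.cons_coe, ← Multiset.cons_coe, ← Multiset.singleton_add,
      ← Multiset.singleton_add]
    exact hxy.reflTransGen_cutExpand.cutExpand_add ih

theorem ProdExtL.transGen_cutExpand {xs ys : List α} (h : ProdExtL r xs ys) :
    TransGen (CutExpand (flip r)) (ys : Multiset α) xs := by
  obtain ⟨hle, i, hi, hi', hlt⟩ := h
  induction hle generalizing i with
  | nil => simp at hi
  | @cons x y xs ys hxy hle ih =>
    rw [← Multiset.cons_coe, ← Multiset.cons_coe, ← Multiset.singleton_add,
      ← Multiset.singleton_add]
    cases i with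
    | zero =>
      exact TransGen.cutExpand_add_reflTransGen (.single (cutExpand_singleton_singleton hlt))
        (reflTransGen_cutExpand_of_forall₂ hle)
    | succ i =>
      exact hxy.reflTransGen_cutExpand.cutExpand_add_transGen
        (ih i (Nat.lt_of_succ_lt_succ hi) (Nat.lt_of_succ_lt_succ hi') hlt)

end ProdExtL

variable {F V : Type}

theorem SSub.sizeOf_lt {s t : Trm F V} (h : SSub s t) : sizeOf t < sizeOf s := by
  induction h with
  | arg hmem | trans hmem =>
    have := List.sizeOf_lt_of_mem hmem
    simp only [Trm.fn.sizeOf_spec]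
    omega

theorem wellFounded_flip_ssub : WellFounded (flip (SSub (F := F) (V := V))) :=
  Subrelation.wf SSub.sizeOf_lt (measure sizeOf).wf

def TrmLT (prec : F → F → Prop) (ℓ : ℕ) (t s : Trm F V) : Prop :=
  Poel prec ℓ (Sum.inl s) (Sum.inl t)

theorem acc_trmLT_fn {prec : F → F → Prop} (hprec : WellFounded (flip prec)) (ℓ : ℕ)
    (f : F) (ss : List (Trm F V)) : Acc (TrmLT prec ℓ) (Trm.fn f ss) := by
  obtain ⟨p, hp⟩ : ∃ p : F × Multiset (Trm F V), p = (f, ↑ss) := ⟨_, rfl⟩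
  induction p using (hprec.prod_lex wellFounded_flip_ssub.cutExpand.transGen).induction
    generalizing f ss with
  | _ p ih =>
    subst hp
    refine ⟨_, fun t ht => ?_⟩
    cases ht with
    | ia hfg _ _ => exact ih _ (Prod.Lex.left _ _ hfg) _ _ rfl
    | tsc hss => exact ih _ (Prod.Lex.right _ hss.transGen_cutExpand) _ _ rfl

theorem wellFounded_trmLT [Finite F] {prec : F → F → Prop} (hirr : ∀ f, ¬ prec f f)
    (htrans : ∀ f g h, prec f g → prec g h → prec f h) (ℓ : ℕ) :
    WellFounded (TrmLT (V := V) prec ℓ) := by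
  have : IsTrans F (flip prec) := ⟨fun _ _ _ h₁ h₂ => htrans _ _ _ h₂ h₁⟩
  have : Std.Irrefl (flip prec) := ⟨hirr⟩
  refine ⟨fun t => ?_⟩
  cases t with
  | var v => exact ⟨_, fun s hs => nomatch hs⟩
  | fn f ss => exact acc_trmLT_fn (Finite.wellFounded_of_trans_of_irrefl _) ℓ f ss

def termsOf (as : List (TS F V)) : Multiset (Trm F V) := (as.map toL).flatten

@[simp]
theorem termsOf_cons (a : TS F V) (as : List (TS F V)) :
    termsOf (a :: as) = ↑(toL a) + termsOf as := by
  simp [termsOf]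

theorem termsOf_map_inl (ss : List (Trm F V)) : termsOf (ss.map Sum.inl) = ss := by
  simp [termsOf, toL, ← List.flatMap_def]

theorem Poel.transGen_cutExpand {prec : F → F → Prop} {ℓ : ℕ} {a b : TS F V}
    (h : Poel prec ℓ a b) :
    TransGen (CutExpand (TrmLT prec ℓ)) (toL b : Multiset (Trm F V)) (toL a) := by
  refine Poel.rec
    (motive_1 := fun a b _ =>
      TransGen (CutExpand (TrmLT prec ℓ)) (toL b : Multiset (Trm F V)) (toL a))
    (motive_2 := fun as bs _ => TransGen (CutExpand (TrmLT prec ℓ)) (termsOf bs) (termsOf as))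
    (motive_3 := fun as bs _ =>
      ReflTransGen (CutExpand (TrmLT prec ℓ)) (termsOf bs) (termsOf as))
    ?ia ?tsc ?ialst ?ms ?prod_strict ?prod_cons_eq ?prod_cons_lt ?ge_nil ?ge_cons_eq ?ge_cons_lt h
  case ia =>
    intro f g ss ts hfg hsub hlen
    exact .single (cutExpand_singleton_singleton (Poel.ia hfg hsub hlen))
  case tsc =>
    intro f ss ts hss
    exact .single (cutExpand_singleton_singleton (Poel.tsc hss))
  case ialst =>
    intro f ss ts hts _ _
    exact .single (cutExpand_singleton fun t ht => hts t (by simpa [toL] using ht))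
  case ms =>
    intro ss ts bs hts _ ih
    subst hts
    rwa [termsOf_map_inl] at ih
  case prod_strict =>
    intro a b as bs _ _ ih ih'
    simpa using ih.cutExpand_add_reflTransGen ih'
  case prod_cons_eq =>
    intro a as bs _ ih
    simpa using ReflTransGen.refl.cutExpand_add_transGen ih
  case prod_cons_lt =>
    intro a b as bs _ _ ih ih'
    simpa using ih.cutExpand_add_reflTransGen ih'.to_reflTransGen
  case ge_nil => exact .refl
  case ge_cons_eq =>
    intro a as bs _ ih
    simpa using ReflTransGen.refl.cutExpand_add ih
  case ge_cons_lt =>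
    intro a b as bs _ _ ih ih'
    simpa using ih.to_reflTransGen.cutExpand_add ih'

/-- `▷_ℓ` over a finite signature with a strict-order precedence is
well-founded. -/
theorem poel_wellFounded {F V : Type} [Finite F] (prec : F → F → Prop)
    (hirr : ∀ f, ¬ prec f f) (htrans : ∀ f g h, prec f g → prec g h → prec f h)
    (ℓ : ℕ) (hℓ : 1 ≤ ℓ) :
    WellFounded (fun b a : TS F V => Poel prec ℓ a b) :=
  Subrelation.wf Poel.transGen_cutExpand
    (InvImage.wf (fun a : TS F V => (toL a : Multiset (Trm F V)))
      (wellFounded_trmLT hirr htrans ℓ).cutExpand.transGen)
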